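/- Fix integers p ≥ 1 and N ≥ 1, a partition x_0 < x_1 < ⋯ < x_N, data y_{n,2k} ∈ ℝ (0 ≤ n ≤ N, 0 ≤ k ≤ p), and an integer k with 1 ≤ k ≤ p. Let μ = min_{1 ≤ n ≤ N} a_n. Let α', α'' ∈ Θ_{2p} with |α'|_∞ < μ^{2k}, and let ℓ_{α'} and ℓ_{α''} be 2p-times continuously differentiable functions on [x_0,x_N] satisfying ℓ_{α'}(L_n(x)) = α'_n ℓ_{α'}(x) + q_n(α'_n, x) and ℓ_{α''}(L_n(x)) = α''_n ℓ_{α''}(x) + q_n(α''_n, x) for all x ∈ [x_0,x_N] and 1 ≤ n ≤ N. Then ‖ℓ_{α'}^{(2k)} − ℓ_{α''}^{(2k)}‖_∞ ≤ (|α' − α''|_∞ / (μ^{2k} − |α'|_∞)) · (‖ℓ_{α''}^{(2k)}‖_∞ + M_{2k,2p}), where |α|_∞ = max_n |α_n|, ‖·‖_∞ denotes the supremum norm over [x_0,x_N], and M_{2k,2p} = (2ρπ/3) Σ_{l=0}^{p−k} ((x_N − x_0)/π)^{2l}. -/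

import Mathlib

/-!
Differentiating the self-affine equation `2k` times gives
`a_n^{2k} ℓ^{(2k)}(L_n t) = α_n ℓ^{(2k)}(t) + q_n(α_n, ·)^{(2k)}(t)`. Subtracting the equations for
`α'` and `α''` and evaluating at a point where `|ℓ_{α'}^{(2k)} - ℓ_{α''}^{(2k)}|` is maximal gives
`μ^{2k} T ≤ |α'|_∞ T + |α' - α''|_∞ (‖ℓ_{α''}^{(2k)}‖_∞ + ‖g^{(2k)}‖_∞)` with
`g = q_n(α'_n, ·) - q_n(α''_n, ·)`. The even derivatives of the polynomial `g` at the endpoints are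
bounded by `|α' - α''|_∞ ρ`, and a maximum principle bounds `g^{(2k)}` inside: going down from
`g^{(2p+2)} = 0`, each `g^{(2l)}` is dominated by `B (1 + c sin (π (t - x_0) / (x_N - x_0)))`,
because `sin (π u) ≥ 3 u (1 - u)` lets the parabola produced by the constant `B` be absorbed into
the sine term.
-/

open Real Set Polynomial

lemma three_mul_mul_one_sub_le_sin_pi_mul_of_le_half {u : ℝ} (hu₀ : 0 ≤ u) (hu : u ≤ 1 / 2) :
    3 * (u * (1 - u)) ≤ sin (π * u) := by
  have hcube := sin_ge_sub_cube (mul_nonneg pi_pos.le hu₀)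
  have hπ3 : π ^ 3 ≤ 36 :=
    (pow_le_pow_left₀ pi_pos.le pi_lt_d2.le 3).trans (by norm_num)
  nlinarith [pi_gt_three, mul_nonneg hu₀ hu₀, mul_nonneg (mul_nonneg hu₀ hu₀) (sub_nonneg.2 hu),
    mul_le_mul_of_nonneg_right hπ3 (mul_nonneg (mul_nonneg hu₀ hu₀) hu₀)]

lemma three_mul_mul_one_sub_le_sin_pi_mul {u : ℝ} (hu₀ : 0 ≤ u) (hu₁ : u ≤ 1) :
    3 * (u * (1 - u)) ≤ sin (π * u) := by
  rcases le_total u (1 / 2) with hu | hu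
  · exact three_mul_mul_one_sub_le_sin_pi_mul_of_le_half hu₀ hu
  · calc 3 * (u * (1 - u)) = 3 * ((1 - u) * (1 - (1 - u))) := by ring
      _ ≤ sin (π * (1 - u)) :=
        three_mul_mul_one_sub_le_sin_pi_mul_of_le_half (by linarith) (by linarith)
      _ = sin (π * u) := by rw [mul_one_sub, sin_pi_sub]

lemma sub_mul_sub_div_two_le_sin {a b t : ℝ} (hab : a < b) (ht : t ∈ Icc a b) :
    (t - a) * (b - t) / 2 ≤ (b - a) ^ 2 / 6 * sin (π / (b - a) * (t - a)) := by
  have hh : 0 < b - a := sub_pos.2 hab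
  set v := (t - a) / (b - a)
  have hv := three_mul_mul_one_sub_le_sin_pi_mul (u := v)
    (div_nonneg (by linarith [ht.1]) hh.le) ((div_le_one hh).2 (by linarith [ht.2]))
  calc (t - a) * (b - t) / 2 = (b - a) ^ 2 / 6 * (3 * (v * (1 - v))) := by
        simp only [v]; field_simp; ring
    _ ≤ (b - a) ^ 2 / 6 * sin (π * v) := by gcongr
    _ = _ := by simp only [v]; congr 2; field_simp

lemma abs_le_of_abs_deriv2_le {a b : ℝ} (hab : a ≤ b) {u u' u'' Φ Φ' Φ'' : ℝ → ℝ}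
    (hu : ∀ t, HasDerivAt u (u' t) t) (hu' : ∀ t, HasDerivAt u' (u'' t) t)
    (hΦ : ∀ t, HasDerivAt Φ (Φ' t) t) (hΦ' : ∀ t, HasDerivAt Φ' (Φ'' t) t)
    (h2 : ∀ t ∈ Icc a b, |u'' t| ≤ -Φ'' t) (ha : |u a| ≤ Φ a) (hb : |u b| ≤ Φ b) :
    ∀ t ∈ Icc a b, |u t| ≤ Φ t := by
  have key : ∀ σ : ℝ, |σ| = 1 → ∀ t ∈ Icc a b, 0 ≤ Φ t + σ * u t := by
    intro σ hσ t ht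
    have hconc : ConcaveOn ℝ (Icc a b) (fun t => Φ t + σ * u t) := by
      refine concaveOn_of_hasDerivWithinAt2_nonpos (f' := fun t => Φ' t + σ * u' t)
        (f'' := fun t => Φ'' t + σ * u'' t) (convex_Icc a b) ?_ ?_ ?_ ?_
      · exact fun t _ => ((hΦ t).add ((hu t).const_mul σ)).continuousAt.continuousWithinAt
      · exact fun t _ => ((hΦ t).add ((hu t).const_mul σ)).hasDerivWithinAt
      · exact fun t _ => ((hΦ' t).add ((hu' t).const_mul σ)).hasDerivWithinAt
      · intro t ht
        have h := h2 t (interior_subset ht)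
        have : σ * u'' t ≤ |u'' t| :=
          calc σ * u'' t ≤ |σ * u'' t| := le_abs_self _
            _ = |u'' t| := by rw [abs_mul, hσ, one_mul]
        linarith
    have hend : ∀ s, |u s| ≤ Φ s → 0 ≤ Φ s + σ * u s := by
      intro s hs
      have : |σ * u s| ≤ Φ s := by rwa [abs_mul, hσ, one_mul]
      linarith [neg_abs_le (σ * u s)]
    exact (le_min (hend a ha) (hend b hb)).trans <| hconc.ge_on_segment (left_mem_Icc.2 hab)
      (right_mem_Icc.2 hab) (by rwa [segment_eq_Icc hab])
  intro t ht
  have h₁ := key 1 (by simp) t ht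
  have h₂ := key (-1) (by simp) t ht
  rw [abs_le]
  constructor <;> linarith

lemma abs_le_one_add_mul_sin_of_abs_deriv2_le {a b : ℝ} (hab : a < b) {u u' u'' : ℝ → ℝ}
    (hu : ∀ t, HasDerivAt u (u' t) t) (hu' : ∀ t, HasDerivAt u' (u'' t) t) {B c : ℝ}
    (h2 : ∀ t ∈ Icc a b, |u'' t| ≤ B * (1 + c * sin (π / (b - a) * (t - a))))
    (ha : |u a| ≤ B) (hb : |u b| ≤ B) {t : ℝ} (ht : t ∈ Icc a b) :
    |u t| ≤ B * (1 + ((b - a) ^ 2 / 6 + ((b - a) / π) ^ 2 * c) * sin (π / (b - a) * (t - a))) := by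
  set κ := π / (b - a) with hκ
  have hκ0 : κ ≠ 0 := div_ne_zero pi_ne_zero (sub_ne_zero.2 hab.ne')
  have hB : 0 ≤ B := (abs_nonneg _).trans ha
  have hθ : ∀ t, HasDerivAt (fun t => κ * (t - a)) κ t := fun t => by
    simpa using ((hasDerivAt_id t).sub_const a).const_mul κ
  -- The majorant solves `Φ'' = -B (1 + c sin (κ (t - a)))` with `Φ a = Φ b = B`.
  have hΦ : ∀ t, HasDerivAt
      (fun t => B * (1 + (t - a) * (b - t) / 2 + c / κ ^ 2 * sin (κ * (t - a))))
      (B * ((a + b - 2 * t) / 2 + c / κ * cos (κ * (t - a)))) t := fun t => by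
    refine (((((hasDerivAt_id' t).sub_const a).fun_mul ((hasDerivAt_id' t).const_sub b)).div_const 2
      |>.const_add 1 |>.fun_add (((hθ t).sin).const_mul (c / κ ^ 2))).const_mul B).congr_deriv ?_
    field_simp
    ring
  have hΦ' : ∀ t, HasDerivAt (fun t => B * ((a + b - 2 * t) / 2 + c / κ * cos (κ * (t - a))))
      (-(B * (1 + c * sin (κ * (t - a))))) t := fun t => by
    refine (((((hasDerivAt_id' t).const_mul 2).const_sub (a + b)).div_const 2
      |>.fun_add (((hθ t).cos).const_mul (c / κ))).const_mul B).congr_deriv ?_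
    field_simp
    ring
  have hsin_b : sin (κ * (b - a)) = 0 := by
    rw [hκ, div_mul_cancel₀ _ (sub_ne_zero.2 hab.ne'), sin_pi]
  have hmax := abs_le_of_abs_deriv2_le hab.le hu hu' hΦ hΦ' (fun t ht => by simpa using h2 t ht)
    (by simpa using ha) (by simpa [hsin_b] using hb) t ht
  have hpar := sub_mul_sub_div_two_le_sin hab ht
  rw [← hκ] at hpar
  have hcκ : c / κ ^ 2 = ((b - a) / π) ^ 2 * c := by
    rw [hκ]; field_simp
  refine hmax.trans (mul_le_mul_of_nonneg_left ?_ hB)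
  rw [hcκ]
  linarith

theorem abs_iteratedDeriv_two_mul_le_of_boundary {a b : ℝ} (hab : a < b) {p k : ℕ} (hkp : k ≤ p)
    {g : ℝ → ℝ} (hg : ContDiff ℝ (2 * p + 2) g)
    (hvanish : ∀ t ∈ Icc a b, iteratedDeriv (2 * p + 2) g t = 0) {B : ℝ}
    (hbd : ∀ l, k ≤ l → l ≤ p →
      |iteratedDeriv (2 * l) g a| ≤ B ∧ |iteratedDeriv (2 * l) g b| ≤ B)
    {t : ℝ} (ht : t ∈ Icc a b) :
    |iteratedDeriv (2 * k) g t| ≤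
      B * ((2 * π / 3) * ∑ l ∈ Finset.range (p - k + 1), ((b - a) / π) ^ (2 * l)) := by
  have hder : ∀ n ≤ 2 * p + 1, ∀ t,
      HasDerivAt (iteratedDeriv n g) (iteratedDeriv (n + 1) g t) t := by
    intro n hn t
    rw [iteratedDeriv_succ]
    exact (hg.differentiable_iteratedDeriv n (by exact_mod_cast (by omega : n < 2 * p + 2))
      t).hasDerivAt
  set r := ((b - a) / π) ^ 2
  set φ := fun t => sin (π / (b - a) * (t - a))
  have hB : 0 ≤ B := (abs_nonneg _).trans (hbd k le_rfl hkp).1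
  have hdescent : ∀ m ≤ p - k, ∀ t ∈ Icc a b, |iteratedDeriv (2 * (p - m)) g t| ≤
      B * (1 + (b - a) ^ 2 / 6 * (∑ j ∈ Finset.range m, r ^ j) * φ t) := by
    intro m
    induction m with
    | zero =>
      intro _ t ht
      simpa using abs_le_of_abs_deriv2_le hab.le (hder (2 * p) (by omega))
        (hder (2 * p + 1) le_rfl) (fun t => hasDerivAt_const t B) (fun t => hasDerivAt_const t 0)
        (fun t ht => by simp [hvanish t ht]) (hbd p hkp le_rfl).1 (hbd p hkp le_rfl).2 t ht
    | succ m ih =>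
      intro hm t ht
      have hidx : 2 * (p - (m + 1)) + 1 + 1 = 2 * (p - m) := by omega
      calc _ ≤ _ := abs_le_one_add_mul_sin_of_abs_deriv2_le hab
            (hder (2 * (p - (m + 1))) (by omega)) (hder (2 * (p - (m + 1)) + 1) (by omega))
            (fun s hs => by rw [hidx]; exact ih (by omega) s hs)
            (hbd _ (by omega) (by omega)).1 (hbd _ (by omega) (by omega)).2 ht
        _ = _ := by simp only [φ, geom_sum_succ]; ring
  have hk := hdescent (p - k) le_rfl t ht
  rw [Nat.sub_sub_self hkp] at hk
  refine hk.trans (mul_le_mul_of_nonneg_left ?_ hB)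
  simp_rw [pow_mul, geom_sum_succ]
  set X := ∑ j ∈ Finset.range (p - k), r ^ j
  have hX : 0 ≤ r * X := by positivity
  have hr : (b - a) ^ 2 = π ^ 2 * r := by simp only [r]; field_simp
  have hπ : π ^ 2 / 6 ≤ 2 * π / 3 := by nlinarith [pi_lt_d2, pi_pos]
  calc 1 + (b - a) ^ 2 / 6 * X * φ t ≤ 1 + π ^ 2 / 6 * (r * X) := by
        rw [hr]
        nlinarith [mul_le_mul_of_nonneg_left (sin_le_one (π / (b - a) * (t - a))) hX]
    _ ≤ 2 * π / 3 * (r * X + 1) := by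
        nlinarith [mul_le_mul_of_nonneg_right hπ hX, pi_gt_three]

theorem Polynomial.contDiff_eval (P : ℝ[X]) (n : WithTop ℕ∞) :
    ContDiff ℝ n (fun t => P.eval t) := by
  simpa using P.contDiff_aeval (𝕜 := ℝ) n

theorem Polynomial.iteratedDeriv_eval (P : ℝ[X]) (n : ℕ) :
    iteratedDeriv n (fun t => P.eval t) = fun t => (derivative^[n] P).eval t := by
  induction n with
  | zero => simp
  | succ n ih =>
    ext t
    rw [iteratedDeriv_succ, ih, Function.iterate_succ_apply', Polynomial.deriv]

theorem Polynomial.iteratedDeriv_eval_eq_zero {P : ℝ[X]} {n : ℕ} (h : P.natDegree < n) :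
    iteratedDeriv n (fun t => P.eval t) = 0 := by
  ext t
  simp [P.iteratedDeriv_eval, iterate_derivative_eq_zero h]

theorem iteratedDerivWithin_comp_affine_eqOn {s : Set ℝ} (hs : UniqueDiffOn ℝ s)
    {n : WithTop ℕ∞} {f g : ℝ → ℝ} (hf : ContDiffOn ℝ n f s) (hg : ContDiffOn ℝ n g s)
    {A c α : ℝ} (hmaps : MapsTo (fun t => A * t + c) s s)
    (heq : EqOn (fun t => f (A * t + c)) (fun t => α * f t + g t) s) {m : ℕ} (hm : m ≤ n) :
    EqOn (fun t => A ^ m * iteratedDerivWithin m f s (A * t + c))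
      (fun t => α * iteratedDerivWithin m f s t + iteratedDerivWithin m g s t) s := by
  induction m with
  | zero => simpa using heq
  | succ m ih =>
    intro t ht
    have hmn : (m : WithTop ℕ∞) < n := lt_of_lt_of_le (by exact_mod_cast m.lt_succ_self) hm
    have hdf := hf.differentiableOn_iteratedDerivWithin hmn hs
    have hdg := hg.differentiableOn_iteratedDerivWithin hmn hs
    have haff : HasDerivWithinAt (fun t => A * t + c) A s t := by
      simpa using (((hasDerivAt_id' t).const_mul A).add_const c).hasDerivWithinAt
    have ih' := ih hmn.le
    have hlhs := (((hdf _ (hmaps ht)).hasDerivWithinAt.comp t haff hmaps).const_mul (A ^ m)).congr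
      (fun y hy => (ih' hy).symm) (ih' ht).symm
    have hrhs := ((hdf t ht).hasDerivWithinAt.const_mul α).add (hdg t ht).hasDerivWithinAt
    have := (hs t ht).eq_deriv _ hlhs hrhs
    simp only [iteratedDerivWithin_succ] at this ⊢
    rw [← this]
    ring

theorem pow_mul_abs_iteratedDerivWithin_sub_comp_le {a b : ℝ} (hab : a < b) {p k : ℕ}
    (hkp : k ≤ p) {f₁ f₂ g₁ g₂ : ℝ → ℝ} (hf₁ : ContDiffOn ℝ (2 * p) f₁ (Icc a b))
    (hf₂ : ContDiffOn ℝ (2 * p) f₂ (Icc a b))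
    (hg₁ : ∃ P : ℝ[X], P.natDegree ≤ 2 * p + 1 ∧ ∀ t, g₁ t = P.eval t)
    (hg₂ : ∃ P : ℝ[X], P.natDegree ≤ 2 * p + 1 ∧ ∀ t, g₂ t = P.eval t) {A c α₁ α₂ : ℝ}
    (hmaps : MapsTo (fun t => A * t + c) (Icc a b) (Icc a b))
    (heq₁ : EqOn (fun t => f₁ (A * t + c)) (fun t => α₁ * f₁ t + g₁ t) (Icc a b))
    (heq₂ : EqOn (fun t => f₂ (A * t + c)) (fun t => α₂ * f₂ t + g₂ t) (Icc a b)) {B : ℝ}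
    (hbd : ∀ l, k ≤ l → l ≤ p →
      |iteratedDeriv (2 * l) g₁ a - iteratedDeriv (2 * l) g₂ a| ≤ B ∧
        |iteratedDeriv (2 * l) g₁ b - iteratedDeriv (2 * l) g₂ b| ≤ B)
    {t : ℝ} (ht : t ∈ Icc a b) :
    A ^ (2 * k) * |iteratedDerivWithin (2 * k) f₁ (Icc a b) (A * t + c) -
        iteratedDerivWithin (2 * k) f₂ (Icc a b) (A * t + c)| ≤
      |α₁| * |iteratedDerivWithin (2 * k) f₁ (Icc a b) t -
          iteratedDerivWithin (2 * k) f₂ (Icc a b) t| +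
        |α₁ - α₂| * |iteratedDerivWithin (2 * k) f₂ (Icc a b) t| +
        B * ((2 * π / 3) * ∑ l ∈ Finset.range (p - k + 1), ((b - a) / π) ^ (2 * l)) := by
  obtain ⟨P₁, hdeg₁, hP₁⟩ := hg₁
  obtain ⟨P₂, hdeg₂, hP₂⟩ := hg₂
  obtain rfl : g₁ = fun t => P₁.eval t := funext hP₁
  obtain rfl : g₂ = fun t => P₂.eval t := funext hP₂
  have hs := uniqueDiffOn_Icc hab
  have hsub : ∀ m t, iteratedDeriv m (fun t => (P₁ - P₂).eval t) t =
      iteratedDeriv m (fun t => P₁.eval t) t - iteratedDeriv m (fun t => P₂.eval t) t := by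
    intro m t
    rw [iteratedDeriv_eval, iteratedDeriv_eval, iteratedDeriv_eval, iterate_derivative_sub]
    exact eval_sub ..
  have hbound := abs_iteratedDeriv_two_mul_le_of_boundary hab hkp ((P₁ - P₂).contDiff_eval _)
    (fun t _ => by
      rw [iteratedDeriv_eval_eq_zero ((natDegree_sub_le _ _).trans_lt (by omega))]; rfl)
    (fun l hkl hlp => by simpa only [hsub] using hbd l hkl hlp) ht
  have hkp' : ((2 * k : ℕ) : WithTop ℕ∞) ≤ 2 * p := by exact_mod_cast (by omega : 2 * k ≤ 2 * p)
  have hd₁ := iteratedDerivWithin_comp_affine_eqOn hs hf₁ (P₁.contDiff_eval _).contDiffOn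
    hmaps heq₁ hkp' ht
  have hd₂ := iteratedDerivWithin_comp_affine_eqOn hs hf₂ (P₂.contDiff_eval _).contDiffOn
    hmaps heq₂ hkp' ht
  simp only [iteratedDerivWithin_eq_iteratedDeriv hs (contDiff_eval _ _).contDiffAt ht]
    at hd₁ hd₂
  set D₁ := iteratedDerivWithin (2 * k) f₁ (Icc a b)
  set D₂ := iteratedDerivWithin (2 * k) f₂ (Icc a b)
  have hA : A ^ (2 * k) * (D₁ (A * t + c) - D₂ (A * t + c)) =
      α₁ * (D₁ t - D₂ t) + (α₁ - α₂) * D₂ t +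
        iteratedDeriv (2 * k) (fun t => (P₁ - P₂).eval t) t := by
    rw [hsub]
    linear_combination hd₁ - hd₂
  rw [← abs_of_nonneg ((even_two_mul k).pow_nonneg A), ← abs_mul, hA, ← abs_mul, ← abs_mul]
  exact (abs_add_three _ _ _).trans (by linarith)

theorem image_affine_Icc_eq {u v c d : ℝ} (huv : u < v) (hcd : c < d) :
    (fun t => (d - c) / (v - u) * t + (v * c - u * d) / (v - u)) '' Icc u v = Icc c d := by
  have hvu : v - u ≠ 0 := sub_ne_zero.2 huv.ne'
  rw [image_affine_Icc' (div_pos (sub_pos.2 hcd) (sub_pos.2 huv))]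
  congr 1 <;> field_simp <;> ring

section Partition

variable {x : ℕ → ℝ} {N : ℕ}

theorem partition_lt (hx : ∀ n < N, x n < x (n + 1)) {m n : ℕ} (hmn : m < n) (hn : n ≤ N) :
    x m < x n :=
  strictMonoOn_Iic_of_lt_succ (fun n hn => by simpa using hx n hn) (by simp; omega)
    (by simpa using hn) hmn

theorem partition_le (hx : ∀ n < N, x n < x (n + 1)) {m n : ℕ} (hmn : m ≤ n) (hn : n ≤ N) :
    x m ≤ x n := by
  rcases hmn.lt_or_eq with h | rfl
  · exact (partition_lt hx h hn).le
  · rfl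

theorem exists_mem_Icc_sub_one (hx : ∀ n < N, x n < x (n + 1)) (hN : 1 ≤ N) {t : ℝ}
    (ht : t ∈ Icc (x 0) (x N)) : ∃ n, 1 ≤ n ∧ n ≤ N ∧ t ∈ Icc (x (n - 1)) (x n) := by
  have hex : ∃ n, t ≤ x n := ⟨N, ht.2⟩
  have hle : Nat.find hex ≤ N := Nat.find_min' hex ht.2
  rcases Nat.eq_zero_or_pos (Nat.find hex) with h0 | hpos
  · have ht0 : t ≤ x 0 := h0 ▸ Nat.find_spec hex
    exact ⟨1, le_rfl, hN, ht.1, ht0.trans (hx 0 hN).le⟩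
  · exact ⟨Nat.find hex, hpos, hle,
      (not_le.1 (Nat.find_min hex (Nat.sub_lt hpos one_pos))).le, Nat.find_spec hex⟩

theorem image_partition_affine (hx : ∀ n < N, x n < x (n + 1)) {n : ℕ} (hn1 : 1 ≤ n)
    (hnN : n ≤ N) :
    (fun t => (x n - x (n - 1)) / (x N - x 0) * t + (x N * x (n - 1) - x 0 * x n) / (x N - x 0)) ''
      Icc (x 0) (x N) = Icc (x (n - 1)) (x n) :=
  image_affine_Icc_eq (partition_lt hx (by omega) le_rfl) (partition_lt hx (by omega) hnN)

theorem mapsTo_partition_affine (hx : ∀ n < N, x n < x (n + 1)) {n : ℕ} (hn1 : 1 ≤ n)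
    (hnN : n ≤ N) :
    MapsTo
      (fun t => (x n - x (n - 1)) / (x N - x 0) * t + (x N * x (n - 1) - x 0 * x n) / (x N - x 0))
      (Icc (x 0) (x N)) (Icc (x 0) (x N)) := by
  rw [mapsTo_iff_image_subset, image_partition_affine hx hn1 hnN]
  exact Icc_subset_Icc (partition_le hx (Nat.zero_le _) (by omega)) (partition_le hx hnN le_rfl)

theorem exists_partition_affine_eq (hx : ∀ n < N, x n < x (n + 1)) (hN : 1 ≤ N) {t : ℝ}
    (ht : t ∈ Icc (x 0) (x N)) : ∃ n, 1 ≤ n ∧ n ≤ N ∧ ∃ s ∈ Icc (x 0) (x N),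
      (x n - x (n - 1)) / (x N - x 0) * s + (x N * x (n - 1) - x 0 * x n) / (x N - x 0) = t := by
  obtain ⟨n, hn1, hnN, htn⟩ := exists_mem_Icc_sub_one hx hN ht
  rw [← image_partition_affine hx hn1 hnN] at htn
  exact ⟨n, hn1, hnN, htn⟩

end Partition

theorem abs_le_sSup_image_abs {α : Type*} [TopologicalSpace α] {S : Set α} (hS : IsCompact S)
    {f : α → ℝ} (hf : ContinuousOn f S) {s : α} (hs : s ∈ S) :
    |f s| ≤ sSup ((fun t => |f t|) '' S) :=
  le_csSup (hS.bddAbove_image hf.abs) (mem_image_of_mem _ hs)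

theorem sSup_image_abs_le_div {α : Type*} [TopologicalSpace α] {S : Set α} (hS : IsCompact S)
    (hne : S.Nonempty) {E : α → ℝ} (hE : ContinuousOn E S) {c c₀ K : ℝ} (hc : c₀ < c)
    (h : ∀ t ∈ S, c * |E t| ≤ c₀ * sSup ((fun s => |E s|) '' S) + K) :
    sSup ((fun s => |E s|) '' S) ≤ K / (c - c₀) := by
  obtain ⟨t, ht, hmax⟩ := hS.exists_isMaxOn hne hE.abs
  have hsup : sSup ((fun s => |E s|) '' S) = |E t| :=
    IsGreatest.csSup_eq ⟨mem_image_of_mem _ ht, by rintro _ ⟨s, hs, rfl⟩; exact hmax hs⟩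
  rw [le_div_iff₀ (sub_pos.2 hc)]
  have := h t ht
  rw [hsup] at this ⊢
  linarith

theorem lidstone_FIF_derivative_scaling_continuity_general
    (p N : ℕ) (hN : 1 ≤ N)
    (x : ℕ → ℝ) (hx : ∀ n < N, x n < x (n + 1))
    (y : ℕ → ℕ → ℝ)
    (k : ℕ) (hk2 : k ≤ p)
    (L : ℕ → ℝ → ℝ)
    (hL : ∀ n t, L n t = ((x n - x (n - 1)) / (x N - x 0)) * t +
      (x N * x (n - 1) - x 0 * x n) / (x N - x 0))
    (q : ℕ → ℝ → ℝ → ℝ)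
    (hq : ∀ n, 1 ≤ n → n ≤ N → ∀ β : ℝ,
      (∃ P : Polynomial ℝ, P.natDegree ≤ 2 * p + 1 ∧ ∀ t, q n β t = P.eval t) ∧
      ∀ l ≤ p,
        iteratedDeriv (2 * l) (q n β) (x 0) =
          ((x n - x (n - 1)) / (x N - x 0)) ^ (2 * l) * y (n - 1) l - β * y 0 l ∧
        iteratedDeriv (2 * l) (q n β) (x N) =
          ((x n - x (n - 1)) / (x N - x 0)) ^ (2 * l) * y n l - β * y N l)
    (α' α'' : ℕ → ℝ)
    (μ ρ dα Aα : ℝ)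
    (hμ : μ = (Finset.Icc 1 N).inf' (Finset.nonempty_Icc.mpr hN)
      (fun n => (x n - x (n - 1)) / (x N - x 0)))
    (hρ : ρ = (Finset.range (p + 1)).sup'
      (Finset.nonempty_range_iff.mpr p.succ_ne_zero)
      (fun j => max |y 0 j| |y N j|))
    (hdα : dα = (Finset.Icc 1 N).sup' (Finset.nonempty_Icc.mpr hN)
      (fun n => |α' n - α'' n|))
    (hAα : Aα = (Finset.Icc 1 N).sup' (Finset.nonempty_Icc.mpr hN)
      (fun n => |α' n|))
    (hAμ : Aα < μ ^ (2 * k))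
    (ℓ' ℓ'' : ℝ → ℝ)
    (hℓ'smooth : ContDiffOn ℝ (2 * p) ℓ' (Set.Icc (x 0) (x N)))
    (hℓ''smooth : ContDiffOn ℝ (2 * p) ℓ'' (Set.Icc (x 0) (x N)))
    (hℓ' : ∀ n, 1 ≤ n → n ≤ N → ∀ t ∈ Set.Icc (x 0) (x N),
      ℓ' (L n t) = α' n * ℓ' t + q n (α' n) t)
    (hℓ'' : ∀ n, 1 ≤ n → n ≤ N → ∀ t ∈ Set.Icc (x 0) (x N),
      ℓ'' (L n t) = α'' n * ℓ'' t + q n (α'' n) t) :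
    sSup ((fun t => |iteratedDerivWithin (2 * k) ℓ' (Set.Icc (x 0) (x N)) t -
        iteratedDerivWithin (2 * k) ℓ'' (Set.Icc (x 0) (x N)) t|) ''
        Set.Icc (x 0) (x N)) ≤
      (dα / (μ ^ (2 * k) - Aα)) *
        (sSup ((fun t => |iteratedDerivWithin (2 * k) ℓ'' (Set.Icc (x 0) (x N)) t|) ''
            Set.Icc (x 0) (x N)) +
          (2 * ρ * Real.pi / 3) *
            ∑ l ∈ Finset.range (p - k + 1), ((x N - x 0) / Real.pi) ^ (2 * l)) := by
  set S := Icc (x 0) (x N)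
  have hx0N : x 0 < x N := partition_lt hx (by omega) le_rfl
  have hcont : ∀ f : ℝ → ℝ, ContDiffOn ℝ (2 * p) f S →
      ContinuousOn (iteratedDerivWithin (2 * k) f S) S := fun f hf =>
    hf.continuousOn_iteratedDerivWithin (by exact_mod_cast (by omega : 2 * k ≤ 2 * p))
      (uniqueDiffOn_Icc hx0N)
  have hE := (hcont ℓ' hℓ'smooth).sub (hcont ℓ'' hℓ''smooth)
  rw [div_mul_eq_mul_div]
  refine sSup_image_abs_le_div isCompact_Icc (nonempty_Icc.2 hx0N.le) hE hAμ fun t ht => ?_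
  obtain ⟨n, hn1, hnN, s, hs, rfl⟩ := exists_partition_affine_eq hx hN ht
  have hn : n ∈ Finset.Icc 1 N := Finset.mem_Icc.2 ⟨hn1, hnN⟩
  have hdαn : |α' n - α'' n| ≤ dα := hdα ▸ Finset.le_sup' (fun m => |α' m - α'' m|) hn
  have hAαn : |α' n| ≤ Aα := hAα ▸ Finset.le_sup' (fun m => |α' m|) hn
  have hyρ : ∀ l ≤ p, |y 0 l| ≤ ρ ∧ |y N l| ≤ ρ := fun l hl => max_le_iff.1
    (hρ ▸ Finset.le_sup' (fun j => max |y 0 j| |y N j|) (Finset.mem_range.2 (by omega)))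
  have hdiff : ∀ u, |u| ≤ ρ → ∀ c, |(c - α' n * u) - (c - α'' n * u)| ≤ dα * ρ := by
    intro u hu c
    rw [show (c - α' n * u) - (c - α'' n * u) = -((α' n - α'' n) * u) by ring, abs_neg, abs_mul]
    exact mul_le_mul hdαn hu (abs_nonneg _) ((abs_nonneg _).trans hdαn)
  have hpiece := pow_mul_abs_iteratedDerivWithin_sub_comp_le hx0N hk2 hℓ'smooth hℓ''smooth
    (hq n hn1 hnN _).1 (hq n hn1 hnN _).1 (mapsTo_partition_affine hx hn1 hnN)
    (fun t ht => by simpa only [hL] using hℓ' n hn1 hnN t ht)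
    (fun t ht => by simpa only [hL] using hℓ'' n hn1 hnN t ht) (B := dα * ρ)
    (fun l _ hl => by
      rw [((hq n hn1 hnN _).2 l hl).1, ((hq n hn1 hnN _).2 l hl).1,
        ((hq n hn1 hnN _).2 l hl).2, ((hq n hn1 hnN _).2 l hl).2]
      exact ⟨hdiff _ (hyρ l hl).1 _, hdiff _ (hyρ l hl).2 _⟩) hs
  have hμ0 : 0 < μ := hμ ▸ (Finset.lt_inf'_iff _).2 fun m hm => div_pos
    (sub_pos.2 (partition_lt hx (by grind) (Finset.mem_Icc.1 hm).2))
    (sub_pos.2 hx0N)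
  have hμn : μ ≤ (x n - x (n - 1)) / (x N - x 0) := hμ ▸ Finset.inf'_le _ hn
  refine (mul_le_mul_of_nonneg_right (pow_le_pow_left₀ hμ0.le hμn _) (abs_nonneg _)).trans
    (hpiece.trans ?_)
  have h₁ := mul_le_mul hAαn (abs_le_sSup_image_abs isCompact_Icc hE hs) (abs_nonneg _)
    ((abs_nonneg _).trans hAαn)
  have h₂ := mul_le_mul hdαn (abs_le_sSup_image_abs isCompact_Icc (hcont ℓ'' hℓ''smooth) hs)
    (abs_nonneg _) ((abs_nonneg _).trans hdαn)
  linear_combination h₁ + h₂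

/-- Continuous dependence of the even-order derivatives of the Lidstone FIF on
the scaling vector: for `1 ≤ k ≤ p`,
`‖ℓ_{α'}^(2k) - ℓ_{α''}^(2k)‖_∞ ≤ (|α' - α''|_∞ / (μ^(2k) - |α'|_∞)) (‖ℓ_{α''}^(2k)‖_∞ + M_{2k,2p})`,
where `μ = min_n a n`, `M_{2k,2p} = (2ρπ/3) ∑_{l=0}^{p-k} ((x N - x 0)/π)^(2l)` and
`ρ = max_{0 ≤ k ≤ p} max {|y 0 k|, |y N k|}`. -/
theorem lidstone_FIF_derivative_scaling_continuity
    (p N : ℕ) (hp : 1 ≤ p) (hN : 1 ≤ N)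
    (x : ℕ → ℝ) (hx : ∀ n < N, x n < x (n + 1))
    (y : ℕ → ℕ → ℝ)
    (k : ℕ) (hk1 : 1 ≤ k) (hk2 : k ≤ p)
    (L : ℕ → ℝ → ℝ)
    (hL : ∀ n t, L n t = ((x n - x (n - 1)) / (x N - x 0)) * t +
      (x N * x (n - 1) - x 0 * x n) / (x N - x 0))
    (q : ℕ → ℝ → ℝ → ℝ)
    (hq : ∀ n, 1 ≤ n → n ≤ N → ∀ β : ℝ,
      (∃ P : Polynomial ℝ, P.natDegree ≤ 2 * p + 1 ∧ ∀ t, q n β t = P.eval t) ∧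
      ∀ l ≤ p,
        iteratedDeriv (2 * l) (q n β) (x 0) =
          ((x n - x (n - 1)) / (x N - x 0)) ^ (2 * l) * y (n - 1) l - β * y 0 l ∧
        iteratedDeriv (2 * l) (q n β) (x N) =
          ((x n - x (n - 1)) / (x N - x 0)) ^ (2 * l) * y n l - β * y N l)
    (α' α'' : ℕ → ℝ)
    (hα' : ∀ n, 1 ≤ n → n ≤ N →
      |α' n| < ((x n - x (n - 1)) / (x N - x 0)) ^ (2 * p))
    (hα'' : ∀ n, 1 ≤ n → n ≤ N →
      |α'' n| < ((x n - x (n - 1)) / (x N - x 0)) ^ (2 * p))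
    (μ ρ dα Aα : ℝ)
    (hμ : μ = (Finset.Icc 1 N).inf' (Finset.nonempty_Icc.mpr hN)
      (fun n => (x n - x (n - 1)) / (x N - x 0)))
    (hρ : ρ = (Finset.range (p + 1)).sup'
      (Finset.nonempty_range_iff.mpr p.succ_ne_zero)
      (fun j => max |y 0 j| |y N j|))
    (hdα : dα = (Finset.Icc 1 N).sup' (Finset.nonempty_Icc.mpr hN)
      (fun n => |α' n - α'' n|))
    (hAα : Aα = (Finset.Icc 1 N).sup' (Finset.nonempty_Icc.mpr hN)
      (fun n => |α' n|))
    (hAμ : Aα < μ ^ (2 * k))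
    (ℓ' ℓ'' : ℝ → ℝ)
    (hℓ'smooth : ContDiffOn ℝ (2 * p) ℓ' (Set.Icc (x 0) (x N)))
    (hℓ''smooth : ContDiffOn ℝ (2 * p) ℓ'' (Set.Icc (x 0) (x N)))
    (hℓ' : ∀ n, 1 ≤ n → n ≤ N → ∀ t ∈ Set.Icc (x 0) (x N),
      ℓ' (L n t) = α' n * ℓ' t + q n (α' n) t)
    (hℓ'' : ∀ n, 1 ≤ n → n ≤ N → ∀ t ∈ Set.Icc (x 0) (x N),
      ℓ'' (L n t) = α'' n * ℓ'' t + q n (α'' n) t) :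
    sSup ((fun t => |iteratedDerivWithin (2 * k) ℓ' (Set.Icc (x 0) (x N)) t -
        iteratedDerivWithin (2 * k) ℓ'' (Set.Icc (x 0) (x N)) t|) ''
        Set.Icc (x 0) (x N)) ≤
      (dα / (μ ^ (2 * k) - Aα)) *
        (sSup ((fun t => |iteratedDerivWithin (2 * k) ℓ'' (Set.Icc (x 0) (x N)) t|) ''
            Set.Icc (x 0) (x N)) +
          (2 * ρ * Real.pi / 3) *
            ∑ l ∈ Finset.range (p - k + 1), ((x N - x 0) / Real.pi) ^ (2 * l)) :=
  lidstone_FIF_derivative_scaling_continuity_general p N hN x hx y k hk2 L hL q hq α' α'' μ ρ dα Aα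
    hμ hρ hdα hAα hAμ ℓ' ℓ'' hℓ'smooth hℓ''smooth hℓ' hℓ''
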